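/- A minimal tight IC POVM {Π_j}_{j=0}^{d²-1} on ℂ^d is a generalized SIC if and only if tr(Π_j) is independent of j. -/

import Mathlib

/-!
A constant trace must be `1/d` since `Σ_j Π_j = 1`, and then the tight-frame identity applied
to `Π_k` writes `α Π_k + (β/d) Σ_j Π_j` as the combination `Σ_j d² tr(Π_j Π_k) Π_j`. The `d²`
elements of an IC POVM form a basis of the Hermitian matrices, so comparing coefficients gives
`d² tr(Π_j Π_k) = α δ_{jk} + β/d`. Conversely, summing the generalized-SIC identity
`tr(dΠ_j dΠ_k) = α' δ_{jk} + ζ` over `k` and using `Σ_k Π_k = 1` shows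
`d² tr(Π_j) = α' + d² ζ` for every `j`.
-/

open Matrix ComplexOrder

noncomputable section

abbrev Mat (d : ℕ) := Matrix (Fin d) (Fin d) ℂ

/-- The real vector space of Hermitian `d × d` complex matrices. -/
abbrev HermM (d : ℕ) : Submodule ℝ (Mat d) := selfAdjoint.submodule ℝ (Mat d)

/-- The identity matrix as a Hermitian matrix. -/
def hermOne (d : ℕ) : HermM d := ⟨1, IsSelfAdjoint.one (Mat d)⟩

/-- The superoperator `|A⟩⟩⟨⟨B| : X ↦ tr(B X) • A` on Hermitian matrices. -/
def outerSO (d : ℕ) (A B : HermM d) : HermM d →ₗ[ℝ] HermM d :=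
  (Complex.reLm ∘ₗ Matrix.traceLinearMap (Fin d) ℝ ℂ ∘ₗ
    LinearMap.mulLeft ℝ (B : Mat d) ∘ₗ (HermM d).subtype).smulRight A

section SelfAdjoint

open Complex ComplexStarModule

variable {A : Type*} [AddCommGroup A] [Module ℂ A] [StarAddMonoid A] [StarModule ℂ A]

def realImaginaryPartEquiv :
    A ≃ₗ[ℝ] selfAdjoint.submodule ℝ A × selfAdjoint.submodule ℝ A where
  toFun a := (ℜ a, ℑ a)
  invFun p := (p.1 : A) + I • (p.2 : A)
  map_add' a b := by simp; rfl
  map_smul' r a := by simp; rfl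
  left_inv a := realPart_add_I_smul_imaginaryPart a
  right_inv p := by
    obtain ⟨⟨x, hx⟩, ⟨y, hy⟩⟩ := p
    ext <;> simp [realPart_apply_coe, imaginaryPart_apply_coe, hx.star_eq, hy.star_eq,
      ← add_smul, ← two_mul]

theorem finrank_selfAdjoint_submodule [FiniteDimensional ℂ A] :
    Module.finrank ℝ (selfAdjoint.submodule ℝ A) = Module.finrank ℂ A := by
  have h := (realImaginaryPartEquiv (A := A)).finrank_eq
  rw [Module.finrank_prod, finrank_real_of_complex] at h
  omega

end SelfAdjoint

namespace Matrix

variable {n ι R : Type*} [Fintype n] [Fintype ι] [CommSemiring R]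

theorem isSelfAdjoint_trace_mul [StarRing R] {A B : Matrix n n R}
    (hA : A.IsHermitian) (hB : B.IsHermitian) : IsSelfAdjoint (trace (A * B)) := by
  rw [IsSelfAdjoint, ← trace_conjTranspose, conjTranspose_mul, hA.eq, hB.eq, trace_mul_comm]

theorem card_mul_eq_of_sum_eq_one_of_trace_eq [DecidableEq n] {A : ι → Matrix n n R}
    (hsum : ∑ k, A k = 1) {t : R} (htr : ∀ j, trace (A j) = t) :
    (Fintype.card ι : R) * t = Fintype.card n := by
  have h := congrArg trace hsum
  rwa [trace_sum, Finset.sum_congr rfl fun j _ => htr j, Finset.sum_const, nsmul_eq_mul,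
    Finset.card_univ, trace_one] at h

theorem sq_mul_trace_eq_of_trace_smul_mul_smul_eq [DecidableEq n] [DecidableEq ι]
    {A : ι → Matrix n n R} (hsum : ∑ k, A k = 1) {c a z : R}
    (hgram : ∀ j k, trace ((c • A j) * (c • A k)) = if j = k then a + z else z) (j : ι) :
    c ^ 2 * trace (A j) = a + Fintype.card ι * z :=
  calc c ^ 2 * trace (A j) = ∑ k, trace ((c • A j) * (c • A k)) := by
        simp_rw [smul_mul_smul_comm, trace_smul, smul_eq_mul, ← Finset.mul_sum, ← trace_sum,
          ← Finset.mul_sum, hsum, mul_one, sq]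
    _ = ∑ k, ((if j = k then a else 0) + z) := by
        refine Finset.sum_congr rfl fun k _ => ?_
        rw [hgram]; split_ifs <;> simp
    _ = a + Fintype.card ι * z := by
        simp [Finset.sum_add_distrib, Finset.card_univ]

end Matrix

section POVM

variable {d : ℕ} {ι : Type*} [Fintype ι]

theorem outerSO_apply (A B X : HermM d) :
    outerSO d A B X = (trace ((B : Mat d) * (X : Mat d))).re • A := rfl

theorem ofReal_re_trace_mul (A B : HermM d) :
    ((trace ((A : Mat d) * (B : Mat d))).re : ℂ) = trace ((A : Mat d) * (B : Mat d)) :=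
  Complex.conj_eq_iff_re.mp (isSelfAdjoint_trace_mul A.2 B.2)

theorem hermOne_eq_sum {P : ι → HermM d} (hsum : ∑ j, (P j : Mat d) = 1) :
    hermOne d = ∑ j, P j :=
  Subtype.ext (by rw [Submodule.coe_sum, hsum]; rfl)

theorem re_trace_eq_inv_of_trace_eq (hcard : Fintype.card ι = d ^ 2) {P : ι → HermM d}
    (hsum : ∑ j, (P j : Mat d) = 1) {t : ℂ} (ht : ∀ j, trace (P j : Mat d) = t) (j : ι) :
    (trace (P j : Mat d)).re = (d : ℝ)⁻¹ := by
  have hpos : 0 < d ^ 2 := hcard ▸ Fintype.card_pos_iff.mpr ⟨j⟩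
  have hd : (d : ℂ) ≠ 0 := Nat.cast_ne_zero.mpr (by rintro rfl; simp at hpos)
  have h := card_mul_eq_of_sum_eq_one_of_trace_eq hsum ht
  rw [hcard, Fintype.card_fin, Nat.cast_pow] at h
  have ht' : t = (d : ℂ)⁻¹ := mul_left_cancel₀ (pow_ne_zero 2 hd) <| by
    rw [h]; field_simp
  rw [ht j, ht', ← Complex.ofReal_natCast, ← Complex.ofReal_inv, Complex.ofReal_re]

theorem linearIndependent_of_isHermitian_mem_span (hcard : Fintype.card ι = d ^ 2)
    {P : ι → HermM d}
    (hIC : ∀ A : Mat d, A.IsHermitian →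
      A ∈ Submodule.span ℝ (Set.range fun j => (P j : Mat d))) :
    LinearIndependent ℝ P := by
  have hspan : Submodule.span ℝ (Set.range P) = ⊤ :=
    (Submodule.span_range_subtype_eq_top_iff (HermM d) fun j => (P j).2).mpr <|
      le_antisymm (Submodule.span_le.mpr <| Set.range_subset_iff.mpr fun j => (P j).2)
        fun A hA => hIC A hA
  refine linearIndependent_of_top_le_span_of_card_eq_finrank hspan.ge ?_
  rw [hcard, finrank_selfAdjoint_submodule, Module.finrank_matrix, Module.finrank_self,
    Fintype.card_fin, sq, mul_one]

theorem sq_mul_re_trace_mul_of_frame [DecidableEq ι] {P : ι → HermM d} {α β : ℝ}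
    (hli : LinearIndependent ℝ P) (hsum : ∑ j, (P j : Mat d) = 1)
    (htr : ∀ j, (trace (P j : Mat d)).re = (d : ℝ)⁻¹)
    (hframe : (d : ℝ) • ∑ j, ((trace (P j : Mat d)).re)⁻¹ • outerSO d (P j) (P j) =
      α • LinearMap.id + β • outerSO d (hermOne d) (hermOne d)) (j k : ι) :
    (d : ℝ) ^ 2 * (trace ((P j : Mat d) * (P k : Mat d))).re =
      (if j = k then α else 0) + β / d := by
  have hk := LinearMap.congr_fun hframe (P k)
  simp only [LinearMap.smul_apply, LinearMap.sum_apply, LinearMap.add_apply, LinearMap.id_apply,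
    outerSO_apply, htr, inv_inv] at hk
  refine Fintype.linearIndependent_iffₛ.mp hli
    (fun i => (d : ℝ) ^ 2 * (trace ((P i : Mat d) * (P k : Mat d))).re)
    (fun i => (if i = k then α else 0) + β / d) ?_ j
  calc ∑ i, ((d : ℝ) ^ 2 * (trace ((P i : Mat d) * (P k : Mat d))).re) • P i
      = (d : ℝ) • ∑ i, (d : ℝ) • (trace ((P i : Mat d) * (P k : Mat d))).re • P i := by
        simp only [Finset.smul_sum, smul_smul, sq, mul_assoc]
    _ = α • P k + β • (trace ((hermOne d : Mat d) * (P k : Mat d))).re • hermOne d := hk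
    _ = ∑ i, ((if i = k then α else 0) + β / d) • P i := by
        simp [hermOne, htr, add_smul, Finset.sum_add_distrib, ite_smul, ← Finset.smul_sum,
          ← hermOne_eq_sum hsum, smul_smul, div_eq_mul_inv]

end POVM

theorem minimal_tightIC_genSIC_iff_const_trace_general (d : ℕ)
    (P : Fin (d ^ 2) → HermM d) (α β : ℝ)
    (hsum : ∑ j, (P j : Mat d) = 1)
    (hIC : ∀ A : Mat d, A.IsHermitian →
      A ∈ Submodule.span ℝ (Set.range fun j => (P j : Mat d)))
    (hα : 0 < α)
    (hframe : (d : ℝ) • ∑ j, ((Matrix.trace (P j : Mat d)).re)⁻¹ • outerSO d (P j) (P j) =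
      α • LinearMap.id + β • outerSO d (hermOne d) (hermOne d)) :
    (∃ α' ζ : ℝ, 0 < α' ∧ ∀ j k,
        Matrix.trace (((d : ℂ) • (P j : Mat d)) * ((d : ℂ) • (P k : Mat d))) =
          if j = k then ((α' : ℂ) + (ζ : ℂ)) else (ζ : ℂ)) ↔
      (∃ t : ℂ, ∀ j, Matrix.trace (P j : Mat d) = t) := by
  constructor
  · rintro ⟨α', ζ, -, hgram⟩
    refine ⟨((α' : ℂ) + (d : ℂ) ^ 2 * ζ) / (d : ℂ) ^ 2, fun j => ?_⟩
    have hd : (d : ℂ) ≠ 0 := Nat.cast_ne_zero.mpr (by rintro rfl; exact j.elim0)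
    rw [eq_div_iff (pow_ne_zero 2 hd), mul_comm,
      sq_mul_trace_eq_of_trace_smul_mul_smul_eq hsum hgram j]
    simp
  · rintro ⟨t, ht⟩
    have htr := re_trace_eq_inv_of_trace_eq (Fintype.card_fin _) hsum ht
    have hli := linearIndependent_of_isHermitian_mem_span (Fintype.card_fin _) hIC
    refine ⟨α, β / d, hα, fun j k => ?_⟩
    rw [smul_mul_smul_comm, trace_smul, smul_eq_mul, ← ofReal_re_trace_mul, ← sq,
      ← Complex.ofReal_natCast, ← Complex.ofReal_pow, ← Complex.ofReal_mul,
      sq_mul_re_trace_mul_of_frame hli hsum htr hframe]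
    split_ifs <;> push_cast <;> ring

/-- A minimal tight IC POVM is a generalized SIC iff tr(Π_j) is
independent of j. -/
theorem minimal_tightIC_genSIC_iff_const_trace (d : ℕ) (hd : 2 ≤ d)
    (P : Fin (d ^ 2) → HermM d) (α β : ℝ)
    (hpsd : ∀ j, ((P j : Mat d)).PosSemidef)
    (htrpos : ∀ j, 0 < (Matrix.trace (P j : Mat d)).re)
    (hsum : ∑ j, (P j : Mat d) = 1)
    (hIC : ∀ A : Mat d, A.IsHermitian →
      A ∈ Submodule.span ℝ (Set.range fun j => (P j : Mat d)))
    (hα : 0 < α) (hβ : 0 < β)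
    (hframe : (d : ℝ) • ∑ j, ((Matrix.trace (P j : Mat d)).re)⁻¹ • outerSO d (P j) (P j) =
      α • LinearMap.id + β • outerSO d (hermOne d) (hermOne d)) :
    (∃ α' ζ : ℝ, 0 < α' ∧ ∀ j k,
        Matrix.trace (((d : ℂ) • (P j : Mat d)) * ((d : ℂ) • (P k : Mat d))) =
          if j = k then ((α' : ℂ) + (ζ : ℂ)) else (ζ : ℂ)) ↔
      (∃ t : ℂ, ∀ j, Matrix.trace (P j : Mat d) = t) :=
  minimal_tightIC_genSIC_iff_const_trace_general d P α β hsum hIC hα hframe
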